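/- arXiv:2008.09002 — 2 statements merged into one kernel-verified Lean document; each statement's English description precedes it below -/
import Mathlib

section
/- Let T be a tree with maximum degree at most 4 and no vertex of degree 2 that admits a convex rectilinear planar drawing. Then exactly one of the following holds: (i) T has no 3-fork and at most four 2-forks; or (ii) T has exactly two 3-forks and no 2-fork; or (iii) T has exactly one 3-fork and at most two 2-forks. Equivalently, the number of 2-forks of T plus twice the number of 3-forks of T is at most four. -/
/-!
A 2-fork or 3-fork `v` claims quadrants `(σ, τ) ∈ ℤˣ × ℤˣ`, i.e. directions of a corner at `v`.
Since no edge may cross the ray of a leaf edge, two perpendicular leaf rays of `v` bound a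
closed quadrant at `v` that contains no other non-leaf vertex, and two opposite leaf rays form a
line that confines all other non-leaf vertices to one side of it; in the latter case `v` claims
both quadrants on the free side. Two leaf rays of `v` never point in the same direction, so a
2-fork claims a quadrant, and a 3-fork, having two opposite leaf rays, claims two. If two
non-leaf vertices claimed the same quadrant, a horizontal leaf ray of one would cross a vertical
leaf ray of the other. Hence the claimed sets are disjoint subsets of a set of four quadrants.
-/

open SimpleGraph

namespace TurnRegular

/-- Degree of a vertex: the cardinality of its neighbor set. -/
noncomputable def deg {V : Type*} (G : SimpleGraph V) (v : V) : ℕ :=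
  (G.neighborSet v).ncard

/-- A splitter: a vertex adjacent to at least three non-leaf vertices. -/
def IsSplitter {V : Type*} (G : SimpleGraph V) (v : V) : Prop :=
  3 ≤ {u | G.Adj v u ∧ 2 ≤ deg G u}.ncard

/-- A `k`-fork: a vertex of degree exactly `k+1` adjacent to at least `k` leaves. -/
def IsKFork {V : Type*} (k : ℕ) (G : SimpleGraph V) (v : V) : Prop :=
  deg G v = k + 1 ∧ k ≤ {u | G.Adj v u ∧ deg G u = 1}.ncard

/-- A `k`-caterpillar: a tree with at least three vertices whose non-leaf vertices
form the vertex set of a path, every non-leaf vertex having degree between `3` and `k`. -/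
def IsKCaterpillar (k : ℕ) {W : Type*} (G : SimpleGraph W) : Prop :=
  G.IsTree ∧ 3 ≤ Nat.card W ∧
  (∃ (a b : W) (p : G.Walk a b), p.IsPath ∧ ∀ v, 2 ≤ deg G v ↔ v ∈ p.support) ∧
  (∀ v, 2 ≤ deg G v → 3 ≤ deg G v ∧ deg G v ≤ k)

/-- The vertex set of the connected component of `G - v` containing `u`
(for `u ≠ v`): all vertices reachable from `u` by a walk avoiding `v`. -/
def compAway {V : Type*} (G : SimpleGraph V) (v u : V) : Set V :=
  {w | ∃ p : G.Walk u w, v ∉ p.support}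

/-- Vertex set of the branch of `G` at `v` through the component of `G - v`
containing `u`. -/
def branchVerts {V : Type*} (G : SimpleGraph V) (v u : V) : Set V :=
  insert v (compAway G v u)

/-- The branch of `G` at `v` through the component of `G - v` containing `u`:
the subgraph induced on `{v} ∪ C`. -/
def branch {V : Type*} (G : SimpleGraph V) (v u : V) :
    SimpleGraph (branchVerts G v u) :=
  G.induce (branchVerts G v u)

/-- A 4-windmill: a tree of maximum degree at most 4 with exactly one splitter `v`,
such that `v` has degree 4 and each of the four branches at `v` is a 3-caterpillar. -/
def Is4Windmill {V : Type*} (G : SimpleGraph V) : Prop :=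
  G.IsTree ∧ (∀ w, deg G w ≤ 4) ∧
  ∃ v, (∀ w, IsSplitter G w ↔ w = v) ∧ deg G v = 4 ∧
    ∀ u, G.Adj v u → IsKCaterpillar 3 (branch G v u)

/-- A 3-windmill: a tree of maximum degree at most 4 with exactly one splitter `v`,
such that `v` has exactly three non-leaf neighbors, every other neighbor of `v`
is a leaf, and among the three branches at `v` through the components containing
the non-leaf neighbors, two are 3-caterpillars and one is a 4-caterpillar. -/
def Is3Windmill {V : Type*} (G : SimpleGraph V) : Prop :=
  G.IsTree ∧ (∀ w, deg G w ≤ 4) ∧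
  ∃ v, (∀ w, IsSplitter G w ↔ w = v) ∧
    ∃ u₁ u₂ u₃, u₁ ≠ u₂ ∧ u₁ ≠ u₃ ∧ u₂ ≠ u₃ ∧
      G.Adj v u₁ ∧ G.Adj v u₂ ∧ G.Adj v u₃ ∧
      2 ≤ deg G u₁ ∧ 2 ≤ deg G u₂ ∧ 2 ≤ deg G u₃ ∧
      (∀ u, G.Adj v u → 2 ≤ deg G u → u = u₁ ∨ u = u₂ ∨ u = u₃) ∧
      (∀ u, G.Adj v u → u ≠ u₁ → u ≠ u₂ → u ≠ u₃ → deg G u = 1) ∧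
      IsKCaterpillar 3 (branch G v u₁) ∧ IsKCaterpillar 3 (branch G v u₂) ∧
      IsKCaterpillar 4 (branch G v u₃)

/-- A double-windmill: a tree of maximum degree at most 4 with exactly two
splitters `u` and `v` such that (i) every vertex strictly between `u` and `v`
on the `u`–`v` path is adjacent, apart from its neighbors on the path, only
to leaves; (ii) each of `u` and `v` has exactly three non-leaf neighbors and
every other neighbor is a leaf; (iii) for each of `u` and `v`, the two branches
at it through the components that contain one of its non-leaf neighbors but not
the other splitter are 3-caterpillars. -/
def IsDoubleWindmill {V : Type*} (G : SimpleGraph V) : Prop :=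
  G.IsTree ∧ (∀ w, deg G w ≤ 4) ∧
  ∃ u v, u ≠ v ∧ (∀ w, IsSplitter G w ↔ (w = u ∨ w = v)) ∧
    (∀ p : G.Walk u v, p.IsPath →
      ∀ w ∈ p.support, w ≠ u → w ≠ v →
        ∀ x, G.Adj w x → x ∉ p.support → deg G x = 1) ∧
    {x | G.Adj u x ∧ 2 ≤ deg G x}.ncard = 3 ∧
    {x | G.Adj v x ∧ 2 ≤ deg G x}.ncard = 3 ∧
    (∀ x, G.Adj u x → deg G x = 1 ∨ 2 ≤ deg G x) ∧
    (∀ x, G.Adj v x → deg G x = 1 ∨ 2 ≤ deg G x) ∧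
    (∀ x, G.Adj u x → 2 ≤ deg G x → v ∉ branchVerts G u x →
      IsKCaterpillar 3 (branch G u x)) ∧
    (∀ x, G.Adj v x → 2 ≤ deg G x → u ∉ branchVerts G v x →
      IsKCaterpillar 3 (branch G v x))

/-- The closed axis-parallel ray starting at `p` and passing through `q`
(extended to infinity beyond `q`). -/
def ray (p q : ℝ × ℝ) : Set (ℝ × ℝ) :=
  {x | ∃ t : ℝ, 0 ≤ t ∧ x = p + t • (q - p)}

/-- A rectilinear planar drawing of `G`: an injective placement of the vertices
in the plane such that each edge is a horizontal or vertical segment, and the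
segments of two distinct edges meet at most in the image of a common endpoint. -/
def IsRectDrawing {V : Type*} (G : SimpleGraph V) (Γ : V → ℝ × ℝ) : Prop :=
  Function.Injective Γ ∧
  (∀ u v, G.Adj u v → (Γ u).1 = (Γ v).1 ∨ (Γ u).2 = (Γ v).2) ∧
  (∀ u v x y, G.Adj u v → G.Adj x y → s(u, v) ≠ s(x, y) →
    ∀ p ∈ segment ℝ (Γ u) (Γ v) ∩ segment ℝ (Γ x) (Γ y),
      ∃ w, (w = u ∨ w = v) ∧ (w = x ∨ w = y) ∧ p = Γ w)

/-- The drawn point set of edge `{a, b}` in the drawing `Γ`: its segment, where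
the edge is extended beyond each leaf endpoint to an infinite axis-parallel ray. -/
noncomputable def edgeDrawn {V : Type*} (G : SimpleGraph V) (Γ : V → ℝ × ℝ)
    (a b : V) : Set (ℝ × ℝ) :=
  (if deg G b = 1 then ray (Γ a) (Γ b) else segment ℝ (Γ a) (Γ b)) ∪
  (if deg G a = 1 then ray (Γ b) (Γ a) else segment ℝ (Γ a) (Γ b))

/-- A convex rectilinear planar drawing: a rectilinear planar drawing in which,
after extending every edge incident to a leaf beyond that leaf to an infinite
axis-parallel ray, the resulting point sets of two distinct edges still meet at
most in the image of a common endpoint. -/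
def IsConvexRectDrawing {V : Type*} (G : SimpleGraph V) (Γ : V → ℝ × ℝ) : Prop :=
  IsRectDrawing G Γ ∧
  (∀ u v x y, G.Adj u v → G.Adj x y → s(u, v) ≠ s(x, y) →
    ∀ p ∈ edgeDrawn G Γ u v ∩ edgeDrawn G Γ x y,
      ∃ w, (w = u ∨ w = v) ∧ (w = x ∨ w = y) ∧ p = Γ w)

/-- `G` admits a convex rectilinear planar drawing. -/
def HasConvexDrawing {V : Type*} (G : SimpleGraph V) : Prop :=
  ∃ Γ : V → ℝ × ℝ, IsConvexRectDrawing G Γ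


open Finset

section Graph

variable {V : Type*} {G : SimpleGraph V}

lemma eq_of_adj_of_deg_eq_one {l a b : V} (hl : deg G l = 1) (ha : G.Adj l a) (hb : G.Adj l b) :
    a = b := by
  obtain ⟨c, hc⟩ := Set.ncard_eq_one.mp hl
  have ha' : a ∈ G.neighborSet l := ha
  have hb' : b ∈ G.neighborSet l := hb
  rw [hc] at ha' hb'
  exact ha'.trans hb'.symm

lemma holds_of_walk_avoiding {P : V → Prop} {v a w : V}
    (hP : ∀ x y, G.Adj x y → x ≠ v → y ≠ v → P x → P y) (q : G.Walk a w) (hq : v ∉ q.support)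
    (ha : P a) : P w := by
  induction q with
  | nil => exact ha
  | cons hxy q ih =>
    rw [Walk.support_cons, List.mem_cons, not_or] at hq
    exact ih hq.2 (hP _ _ hxy (Ne.symm hq.1) (fun h => hq.2 (h ▸ q.start_mem_support)) ha)

lemma exists_adj_walk_avoiding (hconn : G.Connected) {v w : V} (hw : w ≠ v)
    (hdw : deg G w ≠ 1) : ∃ b, G.Adj v b ∧ deg G b ≠ 1 ∧ ∃ q : G.Walk b w, v ∉ q.support := by
  classical
  obtain ⟨p, hp⟩ := (hconn.preconnected v w).some.toPath
  cases p with
  | nil => exact absurd rfl hw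
  | cons hvb q =>
    have hvq := ((Walk.cons_isPath_iff _ _).mp hp).2
    refine ⟨_, hvb, ?_, q, hvq⟩
    cases q with
    | nil => exact hdw
    | cons hbc r =>
      intro hb
      obtain rfl := eq_of_adj_of_deg_eq_one hb hvb.symm hbc
      exact hvq (by simp)

lemma holds_of_connected_avoiding (hconn : G.Connected) {v : V} (P : V → Prop)
    (hP : ∀ x y, G.Adj x y → x ≠ v → y ≠ v → P x → P y)
    (hnb : ∀ b, G.Adj v b → deg G b ≠ 1 → P b) {w : V} (hw : w ≠ v) (hdw : deg G w ≠ 1) : P w := by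
  obtain ⟨b, hvb, hb, q, hq⟩ := exists_adj_walk_avoiding hconn hw hdw
  exact holds_of_walk_avoiding hP q hq (hnb b hvb hb)

lemma IsKFork.finite_neighborSet {k : ℕ} {v : V} (hv : IsKFork k G v) :
    (G.neighborSet v).Finite :=
  Set.finite_of_ncard_ne_zero (by rw [← deg, hv.1]; omega)

lemma IsKFork.subsingleton_nonleaf {k : ℕ} {v : V} (hv : IsKFork k G v) :
    {b | G.Adj v b ∧ deg G b ≠ 1}.Subsingleton := by
  have hleaf : {u | G.Adj v u ∧ deg G u = 1} ⊆ G.neighborSet v := fun u hu => hu.1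
  have hdiff : {b | G.Adj v b ∧ deg G b ≠ 1} = G.neighborSet v \ {u | G.Adj v u ∧ deg G u = 1} := by
    ext b
    simp only [Set.mem_ofPred_eq, Set.mem_sdiff, mem_neighborSet]
    tauto
  have hcard := Set.ncard_sdiff hleaf (hv.finite_neighborSet.subset hleaf)
  rw [← hdiff, ← deg, hv.1] at hcard
  have hle : {b | G.Adj v b ∧ deg G b ≠ 1}.ncard ≤ 1 := by
    have := hv.2
    omega
  intro a ha b hb
  exact (Set.ncard_le_one_iff (hdiff ▸ hv.finite_neighborSet.sdiff)).mp hle ha hb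

end Graph

section Plane

lemma exists_units_smul_lt {a b : ℝ} (h : a ≠ b) : ∃ σ : ℤˣ, σ • a < σ • b := by
  rcases h.lt_or_gt with h | h
  · exact ⟨1, by simpa⟩
  · exact ⟨-1, by simpa⟩

def halfLineX (c : ℝ × ℝ) (σ : ℤˣ) : Set (ℝ × ℝ) :=
  {z | z.2 = c.2 ∧ σ • c.1 ≤ σ • z.1}

def halfLineY (c : ℝ × ℝ) (τ : ℤˣ) : Set (ℝ × ℝ) :=
  {z | z.1 = c.1 ∧ τ • c.2 ≤ τ • z.2}

lemma swap_mem_segment_swap {a b p : ℝ × ℝ} :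
    p.swap ∈ segment ℝ a.swap b.swap ↔ p ∈ segment ℝ a b := by
  simp only [segment, Set.mem_ofPred_eq, Prod.ext_iff, Prod.fst_add, Prod.snd_add, Prod.smul_fst,
    Prod.smul_snd, Prod.fst_swap, Prod.snd_swap]
  grind

lemma swap_mem_ray_swap {a b p : ℝ × ℝ} : p.swap ∈ ray a.swap b.swap ↔ p ∈ ray a b := by
  simp only [ray, Set.mem_ofPred_eq, Prod.ext_iff, Prod.fst_add, Prod.snd_add, Prod.smul_fst,
    Prod.smul_snd, Prod.fst_sub, Prod.snd_sub, Prod.fst_swap, Prod.snd_swap]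
  grind

lemma segment_subset_ray (p q : ℝ × ℝ) : segment ℝ p q ⊆ ray p q := by
  rw [segment_eq_image']
  rintro x ⟨t, ht, rfl⟩
  exact ⟨t, ht.1, rfl⟩

lemma halfLineX_subset_ray {p q : ℝ × ℝ} {σ : ℤˣ} (h₂ : p.2 = q.2) (h₁ : σ • p.1 < σ • q.1) :
    halfLineX p σ ⊆ ray p q := by
  rintro z ⟨hz₂, hz₁⟩
  have hne : q.1 - p.1 ≠ 0 := fun h => h₁.ne (by rw [sub_eq_zero.mp h])
  refine ⟨(z.1 - p.1) / (q.1 - p.1), ?_, ?_⟩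
  · rcases Int.units_eq_one_or σ with rfl | rfl <;> simp only [one_smul, Units.neg_smul,
      neg_le_neg_iff, neg_lt_neg_iff] at h₁ hz₁
    · exact div_nonneg (by linarith) (by linarith)
    · exact div_nonneg_of_nonpos (by linarith) (by linarith)
  · ext
    · simp [div_mul_cancel₀ _ hne]
    · simp [hz₂, ← h₂]

lemma halfLineY_subset_ray {p q : ℝ × ℝ} {τ : ℤˣ} (h₁ : p.1 = q.1) (h₂ : τ • p.2 < τ • q.2) :
    halfLineY p τ ⊆ ray p q := fun _ hz =>
  swap_mem_ray_swap.mp (halfLineX_subset_ray (p := p.swap) (q := q.swap) h₁ h₂ hz)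

lemma mk_mem_segment_of_smul_le {p q : ℝ × ℝ} {y : ℝ} {τ : ℤˣ} (hpq : p.1 = q.1 ∨ p.2 = q.2)
    (hp : τ • p.2 < τ • y) (hq : τ • y ≤ τ • q.2) : (p.1, y) ∈ segment ℝ p q := by
  obtain ⟨p₁, p₂⟩ := p
  obtain ⟨q₁, q₂⟩ := q
  rcases hpq with rfl | rfl
  · rw [← Prod.image_mk_segment_right, segment_eq_uIcc]
    refine ⟨y, ?_, rfl⟩
    rcases Int.units_eq_one_or τ with rfl | rfl <;> simp only [one_smul, Units.neg_smul,
      neg_le_neg_iff, neg_lt_neg_iff] at hp hq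
    · exact Set.mem_uIcc.mpr (Or.inl ⟨hp.le, hq⟩)
    · exact Set.mem_uIcc.mpr (Or.inr ⟨hq, hp.le⟩)
  · exact absurd hq (not_le.mpr hp)

lemma exists_mem_segment_halfLineX_or_halfLineY {p q c : ℝ × ℝ} {σ τ : ℤˣ}
    (hpq : p.1 = q.1 ∨ p.2 = q.2) (hp : σ • p.1 < σ • c.1 ∨ τ • p.2 < τ • c.2)
    (hq₁ : σ • c.1 ≤ σ • q.1) (hq₂ : τ • c.2 ≤ τ • q.2) :
    ∃ z ∈ segment ℝ p q, z ∈ halfLineX c σ ∨ z ∈ halfLineY c τ := by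
  rcases hpq with hpq | hpq
  · have hp₂ : τ • p.2 < τ • c.2 := hp.resolve_left (by rw [hpq]; exact not_lt.mpr hq₁)
    exact ⟨_, mk_mem_segment_of_smul_le (Or.inl hpq) hp₂ hq₂, Or.inl ⟨rfl, hpq ▸ hq₁⟩⟩
  · have hp₁ : σ • p.1 < σ • c.1 := hp.resolve_right (by rw [hpq]; exact not_lt.mpr hq₂)
    have h := mk_mem_segment_of_smul_le (p := p.swap) (q := q.swap) (Or.inl hpq) hp₁ hq₁
    exact ⟨(c.1, p.2), swap_mem_segment_swap.mp h, Or.inr ⟨rfl, hpq ▸ hq₂⟩⟩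

end Plane

section Drawing

variable {V : Type*} {G : SimpleGraph V} {Γ : V → ℝ × ℝ}

lemma IsConvexRectDrawing.injective (hc : IsConvexRectDrawing G Γ) : Function.Injective Γ :=
  hc.1.1

lemma IsConvexRectDrawing.fst_eq_or_snd_eq (hc : IsConvexRectDrawing G Γ) {u v : V}
    (h : G.Adj u v) : (Γ u).1 = (Γ v).1 ∨ (Γ u).2 = (Γ v).2 :=
  hc.1.2.1 u v h

lemma swap_mem_edgeDrawn_swap {a b : V} {p : ℝ × ℝ} :
    p.swap ∈ edgeDrawn G (Prod.swap ∘ Γ) a b ↔ p ∈ edgeDrawn G Γ a b := by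
  unfold edgeDrawn
  split_ifs <;> simp only [Set.mem_union, Function.comp_apply, swap_mem_segment_swap,
    swap_mem_ray_swap]

lemma IsConvexRectDrawing.swap (hc : IsConvexRectDrawing G Γ) :
    IsConvexRectDrawing G (Prod.swap ∘ Γ) := by
  refine ⟨⟨Prod.swap_injective.comp hc.injective, fun u v h => (hc.fst_eq_or_snd_eq h).symm,
    ?_⟩, ?_⟩
  · intro u v x y huv hxy hne p hp
    obtain ⟨w, hwuv, hwxy, hw⟩ := hc.1.2.2 u v x y huv hxy hne p.swap
      ⟨swap_mem_segment_swap.mp (by simpa using hp.1),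
        swap_mem_segment_swap.mp (by simpa using hp.2)⟩
    exact ⟨w, hwuv, hwxy, by simp [← hw]⟩
  · intro u v x y huv hxy hne p hp
    obtain ⟨w, hwuv, hwxy, hw⟩ := hc.2 u v x y huv hxy hne p.swap
      ⟨swap_mem_edgeDrawn_swap.mp (by simpa using hp.1),
        swap_mem_edgeDrawn_swap.mp (by simpa using hp.2)⟩
    exact ⟨w, hwuv, hwxy, by simp [← hw]⟩

lemma ray_subset_edgeDrawn {v l : V} (hl : deg G l = 1) :
    ray (Γ v) (Γ l) ⊆ edgeDrawn G Γ v l := by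
  intro p hp
  simp only [edgeDrawn, if_pos hl]
  exact Or.inl hp

lemma segment_subset_edgeDrawn {a b : V} : segment ℝ (Γ a) (Γ b) ⊆ edgeDrawn G Γ a b := by
  intro p hp
  refine Or.inl ?_
  split_ifs
  · exact segment_subset_ray _ _ hp
  · exact hp

lemma IsConvexRectDrawing.disjoint_ray_segment (hc : IsConvexRectDrawing G Γ) {v l x y : V}
    (hvl : G.Adj v l) (hl : deg G l = 1) (hxy : G.Adj x y) (hx : x ≠ v) (hy : y ≠ v) :
    Disjoint (ray (Γ v) (Γ l)) (segment ℝ (Γ x) (Γ y)) := by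
  have hxl : x ≠ l := fun h => hy (eq_of_adj_of_deg_eq_one hl (h ▸ hxy) hvl.symm)
  have hyl : y ≠ l := fun h => hx (eq_of_adj_of_deg_eq_one hl (h ▸ hxy.symm) hvl.symm)
  refine Set.disjoint_left.mpr fun p hp hp' => ?_
  obtain ⟨w, hwvl, hwxy, -⟩ := hc.2 v l x y hvl hxy (by simp [hx.symm, hy.symm]) p
    ⟨ray_subset_edgeDrawn hl hp, segment_subset_edgeDrawn hp'⟩
  rcases hwvl with rfl | rfl <;> rcases hwxy with h | h
  exacts [hx h.symm, hy h.symm, hxl h.symm, hyl h.symm]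

lemma IsConvexRectDrawing.notMem_ray (hc : IsConvexRectDrawing G Γ) {v l u : V}
    (hvl : G.Adj v l) (hl : deg G l = 1) (hvu : G.Adj v u) (hul : u ≠ l) :
    Γ u ∉ ray (Γ v) (Γ l) := by
  intro hu
  obtain ⟨w, hwvl, -, hw⟩ := hc.2 v l v u hvl hvu (by simp [hul.symm, hvl.ne']) (Γ u)
    ⟨ray_subset_edgeDrawn hl hu, segment_subset_edgeDrawn (right_mem_segment ℝ _ _)⟩
  obtain rfl := hc.injective hw
  rcases hwvl with rfl | rfl
  exacts [hvu.ne rfl, hul rfl]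

lemma IsConvexRectDrawing.disjoint_ray_ray (hc : IsConvexRectDrawing G Γ) {v l v' l' : V}
    (hvv' : v ≠ v') (hv : deg G v ≠ 1) (hv' : deg G v' ≠ 1) (hvl : G.Adj v l) (hl : deg G l = 1)
    (hvl' : G.Adj v' l') (hl' : deg G l' = 1) :
    Disjoint (ray (Γ v) (Γ l)) (ray (Γ v') (Γ l')) := by
  have hll' : l ≠ l' := fun h => hvv' (eq_of_adj_of_deg_eq_one hl hvl.symm (h ▸ hvl'.symm))
  have hvl'' : v ≠ l' := fun h => hv (h ▸ hl')
  have hlv' : l ≠ v' := fun h => hv' (h ▸ hl)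
  refine Set.disjoint_left.mpr fun p hp hp' => ?_
  obtain ⟨w, hwvl, hwvl', -⟩ := hc.2 v l v' l' hvl hvl' (by simp [hvv', hvl'']) p
    ⟨ray_subset_edgeDrawn hl hp, ray_subset_edgeDrawn hl' hp'⟩
  rcases hwvl with rfl | rfl <;> rcases hwvl' with h | h
  exacts [hvv' h, hvl'' h, hlv' h, hll' h]

end Drawing

section Quadrants

variable {V : Type*}

def IsLeafRayX (G : SimpleGraph V) (Γ : V → ℝ × ℝ) (σ : ℤˣ) (v l : V) : Prop :=
  G.Adj v l ∧ deg G l = 1 ∧ (Γ v).2 = (Γ l).2 ∧ σ • (Γ v).1 < σ • (Γ l).1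

def IsLeafRayY (G : SimpleGraph V) (Γ : V → ℝ × ℝ) (τ : ℤˣ) (v l : V) : Prop :=
  G.Adj v l ∧ deg G l = 1 ∧ (Γ v).1 = (Γ l).1 ∧ τ • (Γ v).2 < τ • (Γ l).2

def QuadrantFree (G : SimpleGraph V) (Γ : V → ℝ × ℝ) (σ τ : ℤˣ) (v : V) : Prop :=
  ∀ w, w ≠ v → deg G w ≠ 1 → σ • (Γ w).1 < σ • (Γ v).1 ∨ τ • (Γ w).2 < τ • (Γ v).2

def BehindX (G : SimpleGraph V) (Γ : V → ℝ × ℝ) (σ : ℤˣ) (v : V) : Prop :=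
  ∀ w, w ≠ v → deg G w ≠ 1 → σ • (Γ w).1 < σ • (Γ v).1

def BehindY (G : SimpleGraph V) (Γ : V → ℝ × ℝ) (τ : ℤˣ) (v : V) : Prop :=
  ∀ w, w ≠ v → deg G w ≠ 1 → τ • (Γ w).2 < τ • (Γ v).2

/-- The closed quadrant at `v` opening in direction `(σ, τ)` contains no other non-leaf vertex,
and each of the two half-lines bounding it is a leaf ray of `v` or has all other non-leaf
vertices strictly behind it. -/
def ClaimsQuadrant (G : SimpleGraph V) (Γ : V → ℝ × ℝ) (σ τ : ℤˣ) (v : V) : Prop :=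
  QuadrantFree G Γ σ τ v ∧ ((∃ l, IsLeafRayX G Γ σ v l) ∨ BehindX G Γ σ v) ∧
    ((∃ l, IsLeafRayY G Γ τ v l) ∨ BehindY G Γ τ v)

open Classical in
noncomputable def claimedQuadrants (G : SimpleGraph V) (Γ : V → ℝ × ℝ) (v : V) :
    Finset (ℤˣ × ℤˣ) :=
  {q | ClaimsQuadrant G Γ q.1 q.2 v}

variable {G : SimpleGraph V} {Γ : V → ℝ × ℝ} {σ τ : ℤˣ} {v : V}

lemma mem_claimedQuadrants {q : ℤˣ × ℤˣ} :
    q ∈ claimedQuadrants G Γ v ↔ ClaimsQuadrant G Γ q.1 q.2 v := by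
  simp [claimedQuadrants]

lemma claimsQuadrant_swap : ClaimsQuadrant G (Prod.swap ∘ Γ) τ σ v ↔ ClaimsQuadrant G Γ σ τ v :=
  ⟨fun ⟨h₁, h₂, h₃⟩ => ⟨fun w hw hdw => (h₁ w hw hdw).symm, h₃, h₂⟩,
    fun ⟨h₁, h₂, h₃⟩ => ⟨fun w hw hdw => (h₁ w hw hdw).symm, h₃, h₂⟩⟩

lemma IsLeafRayX.halfLineX_subset {l : V} (h : IsLeafRayX G Γ σ v l) :
    halfLineX (Γ v) σ ⊆ ray (Γ v) (Γ l) :=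
  halfLineX_subset_ray h.2.2.1 h.2.2.2

lemma IsLeafRayY.halfLineY_subset {l : V} (h : IsLeafRayY G Γ τ v l) :
    halfLineY (Γ v) τ ⊆ ray (Γ v) (Γ l) :=
  halfLineY_subset_ray h.2.2.1 h.2.2.2

lemma exists_isLeafRayX (hc : IsConvexRectDrawing G Γ) {l : V} (hvl : G.Adj v l)
    (hl : deg G l = 1) (h : (Γ v).2 = (Γ l).2) : ∃ σ, IsLeafRayX G Γ σ v l := by
  obtain ⟨σ, hσ⟩ := exists_units_smul_lt fun h₁ => hvl.ne (hc.injective (Prod.ext h₁ h))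
  exact ⟨σ, hvl, hl, h, hσ⟩

lemma exists_isLeafRayY (hc : IsConvexRectDrawing G Γ) {l : V} (hvl : G.Adj v l)
    (hl : deg G l = 1) (h : (Γ v).1 = (Γ l).1) : ∃ τ, IsLeafRayY G Γ τ v l :=
  exists_isLeafRayX hc.swap hvl hl h

lemma IsLeafRayX.eq (hc : IsConvexRectDrawing G Γ) {a b : V} (ha : IsLeafRayX G Γ σ v a)
    (hb : IsLeafRayX G Γ σ v b) : a = b := by
  by_contra hab
  exact hc.notMem_ray ha.1 ha.2.1 hb.1 (Ne.symm hab)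
    (ha.halfLineX_subset ⟨hb.2.2.1.symm, hb.2.2.2.le⟩)

lemma ClaimsQuadrant.false_of_lt (hc : IsConvexRectDrawing G Γ) {v' : V} (hvv' : v ≠ v')
    (hv : deg G v ≠ 1) (hv' : deg G v' ≠ 1) (h : ClaimsQuadrant G Γ σ τ v)
    (h' : ClaimsQuadrant G Γ σ τ v') (hx : σ • (Γ v').1 < σ • (Γ v).1)
    (hy : τ • (Γ v).2 < τ • (Γ v').2) : False := by
  obtain ⟨l', hl'⟩ := h'.2.1.resolve_right fun hb => (hb v hvv' hv).not_gt hx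
  obtain ⟨l, hl⟩ := h.2.2.resolve_right fun hb => (hb v' hvv'.symm hv').not_gt hy
  have hz : ((Γ v).1, (Γ v').2) ∈ halfLineY (Γ v) τ ∩ halfLineX (Γ v') σ :=
    ⟨⟨rfl, hy.le⟩, rfl, hx.le⟩
  exact Set.disjoint_left.mp (hc.disjoint_ray_ray hvv' hv hv' hl.1 hl.2.1 hl'.1 hl'.2.1)
    (hl.halfLineY_subset hz.1) (hl'.halfLineX_subset hz.2)

lemma ClaimsQuadrant.eq (hc : IsConvexRectDrawing G Γ) {v' : V} (hv : deg G v ≠ 1)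
    (hv' : deg G v' ≠ 1) (h : ClaimsQuadrant G Γ σ τ v) (h' : ClaimsQuadrant G Γ σ τ v') :
    v = v' := by
  by_contra hvv'
  rcases h.1 v' (Ne.symm hvv') hv' with hx | hy <;> rcases h'.1 v hvv' hv with hx' | hy'
  · exact lt_asymm hx hx'
  · exact h.false_of_lt hc hvv' hv hv' h' hx hy'
  · exact h'.false_of_lt hc (Ne.symm hvv') hv' hv h hx' hy
  · exact lt_asymm hy hy'

lemma disjoint_claimedQuadrants (hc : IsConvexRectDrawing G Γ) {w : V} (hv : deg G v ≠ 1)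
    (hw : deg G w ≠ 1) (hvw : v ≠ w) :
    Disjoint (claimedQuadrants G Γ v) (claimedQuadrants G Γ w) :=
  disjoint_left.mpr fun _ hqv hqw =>
    hvw ((mem_claimedQuadrants.mp hqv).eq hc hv hw (mem_claimedQuadrants.mp hqw))

lemma quadrantFree_of_isLeafRay (hc : IsConvexRectDrawing G Γ) (hconn : G.Connected)
    {l₁ l₂ : V} (h₁ : IsLeafRayX G Γ σ v l₁) (h₂ : IsLeafRayY G Γ τ v l₂) :
    QuadrantFree G Γ σ τ v := by
  intro w hw hdw
  refine holds_of_connected_avoiding hconn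
    (fun x => σ • (Γ x).1 < σ • (Γ v).1 ∨ τ • (Γ x).2 < τ • (Γ v).2) ?_ ?_ hw hdw
  · intro x y hxy hx hy hPx
    by_contra hPy
    simp only [not_or, not_lt] at hPy
    obtain ⟨z, hzs, hz | hz⟩ :=
      exists_mem_segment_halfLineX_or_halfLineY (hc.fst_eq_or_snd_eq hxy) hPx hPy.1 hPy.2
    · exact Set.disjoint_left.mp (hc.disjoint_ray_segment h₁.1 h₁.2.1 hxy hx hy)
        (h₁.halfLineX_subset hz) hzs
    · exact Set.disjoint_left.mp (hc.disjoint_ray_segment h₂.1 h₂.2.1 hxy hx hy)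
        (h₂.halfLineY_subset hz) hzs
  · intro b hvb hb
    by_contra hPb
    simp only [not_or, not_lt] at hPb
    rcases hc.fst_eq_or_snd_eq hvb with hx | hy
    · exact hc.notMem_ray h₂.1 h₂.2.1 hvb (fun h => hb (h ▸ h₂.2.1))
        (h₂.halfLineY_subset ⟨hx.symm, hPb.2⟩)
    · exact hc.notMem_ray h₁.1 h₁.2.1 hvb (fun h => hb (h ▸ h₁.2.1))
        (h₁.halfLineX_subset ⟨hy.symm, hPb.1⟩)

lemma exists_behindY_of_isLeafRayX (hc : IsConvexRectDrawing G Γ) (hconn : G.Connected)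
    {l₁ l₂ : V} (h₁ : IsLeafRayX G Γ σ v l₁) (h₂ : IsLeafRayX G Γ (-σ) v l₂)
    (hsub : {b | G.Adj v b ∧ deg G b ≠ 1}.Subsingleton) : ∃ τ, BehindY G Γ τ v := by
  have hline : ∀ z : ℝ × ℝ, z.2 = (Γ v).2 → z ∈ ray (Γ v) (Γ l₁) ∨ z ∈ ray (Γ v) (Γ l₂) := by
    intro z hz
    rcases le_total (σ • (Γ v).1) (σ • z.1) with h | h
    · exact Or.inl (h₁.halfLineX_subset ⟨hz, h⟩)
    · exact Or.inr (h₂.halfLineX_subset ⟨hz, by simpa using h⟩)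
  obtain ⟨τ, hτ⟩ : ∃ τ : ℤˣ, ∀ b, G.Adj v b → deg G b ≠ 1 → τ • (Γ b).2 < τ • (Γ v).2 := by
    by_cases hex : ∃ u, G.Adj v u ∧ deg G u ≠ 1
    · obtain ⟨u, hvu, hu⟩ := hex
      have hne : (Γ u).2 ≠ (Γ v).2 := fun h => (hline _ h).elim
        (hc.notMem_ray h₁.1 h₁.2.1 hvu fun h' => hu (h' ▸ h₁.2.1))
        (hc.notMem_ray h₂.1 h₂.2.1 hvu fun h' => hu (h' ▸ h₂.2.1))
      obtain ⟨τ, hτ⟩ := exists_units_smul_lt hne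
      refine ⟨τ, fun b hvb hb => ?_⟩
      rwa [hsub ⟨hvb, hb⟩ ⟨hvu, hu⟩]
    · exact ⟨1, fun b hvb hb => absurd ⟨b, hvb, hb⟩ hex⟩
  refine ⟨τ, fun w hw hdw =>
    holds_of_connected_avoiding hconn (fun x => τ • (Γ x).2 < τ • (Γ v).2) ?_ hτ hw hdw⟩
  intro x y hxy hx hy hPx
  by_contra hPy
  have hz := mk_mem_segment_of_smul_le (hc.fst_eq_or_snd_eq hxy) hPx (not_lt.mp hPy)
  rcases hline ((Γ x).1, (Γ v).2) rfl with h | h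
  · exact Set.disjoint_left.mp (hc.disjoint_ray_segment h₁.1 h₁.2.1 hxy hx hy) h hz
  · exact Set.disjoint_left.mp (hc.disjoint_ray_segment h₂.1 h₂.2.1 hxy hx hy) h hz

lemma exists_forall_claimsQuadrant_of_horizontal_leaves (hc : IsConvexRectDrawing G Γ)
    (hconn : G.Connected) (hsub : {b | G.Adj v b ∧ deg G b ≠ 1}.Subsingleton) {a b : V}
    (hva : G.Adj v a) (hda : deg G a = 1) (hvb : G.Adj v b) (hdb : deg G b = 1) (hab : a ≠ b)
    (hya : (Γ v).2 = (Γ a).2) (hyb : (Γ v).2 = (Γ b).2) :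
    ∃ τ, ∀ σ, ClaimsQuadrant G Γ σ τ v := by
  obtain ⟨σa, ra⟩ := exists_isLeafRayX hc hva hda hya
  obtain ⟨σb, rb⟩ := exists_isLeafRayX hc hvb hdb hyb
  obtain rfl : σb = -σa := Int.units_ne_iff_eq_neg.mp fun h => hab (ra.eq hc (h ▸ rb))
  obtain ⟨τ, hτ⟩ := exists_behindY_of_isLeafRayX hc hconn ra rb hsub
  refine ⟨τ, fun σ => ⟨fun w hw hdw => Or.inr (hτ w hw hdw), Or.inl ?_, Or.inr hτ⟩⟩
  by_cases h : σ = σa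
  · exact ⟨a, h ▸ ra⟩
  · exact ⟨b, Int.units_ne_iff_eq_neg.mp h ▸ rb⟩

lemma two_le_card_claimedQuadrants_of_parallel_leaves (hc : IsConvexRectDrawing G Γ)
    (hconn : G.Connected) (hsub : {b | G.Adj v b ∧ deg G b ≠ 1}.Subsingleton) {a b : V}
    (hva : G.Adj v a) (hda : deg G a = 1) (hvb : G.Adj v b) (hdb : deg G b = 1) (hab : a ≠ b)
    (hpar : (Γ v).1 = (Γ a).1 ↔ (Γ v).1 = (Γ b).1) : 2 ≤ #(claimedQuadrants G Γ v) := by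
  by_cases hxa : (Γ v).1 = (Γ a).1
  · obtain ⟨σ, h⟩ := exists_forall_claimsQuadrant_of_horizontal_leaves hc.swap hconn hsub
      hva hda hvb hdb hab hxa (hpar.mp hxa)
    exact one_lt_card.mpr ⟨(σ, 1), mem_claimedQuadrants.mpr (claimsQuadrant_swap.mp (h 1)),
      (σ, -1), mem_claimedQuadrants.mpr (claimsQuadrant_swap.mp (h (-1))), by simp⟩
  · obtain ⟨τ, h⟩ := exists_forall_claimsQuadrant_of_horizontal_leaves hc hconn hsub
      hva hda hvb hdb hab ((hc.fst_eq_or_snd_eq hva).resolve_left hxa)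
      ((hc.fst_eq_or_snd_eq hvb).resolve_left (mt hpar.mpr hxa))
    exact one_lt_card.mpr ⟨(1, τ), mem_claimedQuadrants.mpr (h 1),
      (-1, τ), mem_claimedQuadrants.mpr (h (-1)), by simp⟩

lemma one_le_card_claimedQuadrants_of_isKFork_two (hc : IsConvexRectDrawing G Γ)
    (hconn : G.Connected) (hv : IsKFork 2 G v) : 1 ≤ #(claimedQuadrants G Γ v) := by
  obtain ⟨a, ⟨hva, hda⟩, b, ⟨hvb, hdb⟩, hab⟩ :=
    (Set.one_lt_ncard (hv.finite_neighborSet.subset fun u hu => hu.1)).mp hv.2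
  by_cases hpar : (Γ v).1 = (Γ a).1 ↔ (Γ v).1 = (Γ b).1
  · exact one_le_two.trans
      (two_le_card_claimedQuadrants_of_parallel_leaves hc hconn hv.subsingleton_nonleaf
        hva hda hvb hdb hab hpar)
  have hperp : ∀ {l₁ l₂ : V}, G.Adj v l₁ → deg G l₁ = 1 → G.Adj v l₂ → deg G l₂ = 1 →
      (Γ v).2 = (Γ l₁).2 → (Γ v).1 = (Γ l₂).1 → 1 ≤ #(claimedQuadrants G Γ v) := by
    intro l₁ l₂ hvl₁ hl₁ hvl₂ hl₂ hy hx
    obtain ⟨σ, h₁⟩ := exists_isLeafRayX hc hvl₁ hl₁ hy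
    obtain ⟨τ, h₂⟩ := exists_isLeafRayY hc hvl₂ hl₂ hx
    exact card_pos.mpr ⟨(σ, τ), mem_claimedQuadrants.mpr
      ⟨quadrantFree_of_isLeafRay hc hconn h₁ h₂, Or.inl ⟨l₁, h₁⟩, Or.inl ⟨l₂, h₂⟩⟩⟩
  by_cases hxa : (Γ v).1 = (Γ a).1
  · exact hperp hvb hdb hva hda ((hc.fst_eq_or_snd_eq hvb).resolve_left (by tauto)) hxa
  · exact hperp hva hda hvb hdb ((hc.fst_eq_or_snd_eq hva).resolve_left hxa) (by tauto)

lemma two_le_card_claimedQuadrants_of_isKFork_three (hc : IsConvexRectDrawing G Γ)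
    (hconn : G.Connected) (hv : IsKFork 3 G v) : 2 ≤ #(claimedQuadrants G Γ v) := by
  obtain ⟨a, b, c, ⟨hva, hda⟩, ⟨hvb, hdb⟩, ⟨hvc, hdc⟩, hab, hac, hbc⟩ :=
    (Set.two_lt_ncard_iff (hv.finite_neighborSet.subset fun u hu => hu.1)).mp hv.2
  have hsub := hv.subsingleton_nonleaf
  -- two of the three leaf edges at `v` are parallel
  by_cases hpar : (Γ v).1 = (Γ a).1 ↔ (Γ v).1 = (Γ b).1
  · exact two_le_card_claimedQuadrants_of_parallel_leaves hc hconn hsub hva hda hvb hdb hab hpar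
  by_cases hpar' : (Γ v).1 = (Γ a).1 ↔ (Γ v).1 = (Γ c).1
  · exact two_le_card_claimedQuadrants_of_parallel_leaves hc hconn hsub hva hda hvc hdc hac hpar'
  exact two_le_card_claimedQuadrants_of_parallel_leaves hc hconn hsub hvb hdb hvc hdc hbc (by tauto)

end Quadrants

lemma card_add_two_mul_card_le_card {ι α : Type*} [DecidableEq ι] [Fintype α]
    {A B : Finset ι} (hAB : Disjoint A B) {S : ι → Finset α}
    (hS : (↑(A ∪ B) : Set ι).PairwiseDisjoint S) (hA : ∀ i ∈ A, 1 ≤ #(S i))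
    (hB : ∀ i ∈ B, 2 ≤ #(S i)) : #A + 2 * #B ≤ Fintype.card α := by
  classical
  calc #A + 2 * #B = ∑ i ∈ A, 1 + ∑ i ∈ B, 2 := by simp [mul_comm]
    _ ≤ ∑ i ∈ A, #(S i) + ∑ i ∈ B, #(S i) := add_le_add (sum_le_sum hA) (sum_le_sum hB)
    _ = #((A ∪ B).biUnion S) := by rw [card_biUnion hS, sum_union hAB]
    _ ≤ Fintype.card α := card_le_univ _

theorem stmt5_general {V : Type*} [Fintype V] (G : SimpleGraph V)
    (htree : G.IsTree) (hdraw : HasConvexDrawing G) :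
    (({v | IsKFork 3 G v}.ncard = 0 ∧ {v | IsKFork 2 G v}.ncard ≤ 4) ∨
     ({v | IsKFork 3 G v}.ncard = 2 ∧ {v | IsKFork 2 G v}.ncard = 0) ∨
     ({v | IsKFork 3 G v}.ncard = 1 ∧ {v | IsKFork 2 G v}.ncard ≤ 2)) ∧
    {v | IsKFork 2 G v}.ncard + 2 * {v | IsKFork 3 G v}.ncard ≤ 4 := by
  classical
  obtain ⟨Γ, hc⟩ := hdraw
  have hcard : ∀ k, {v | IsKFork k G v}.ncard = #{v | IsKFork k G v} := fun k => by
    rw [← Set.ncard_coe_finset, coe_filter]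
    simp
  have hnonleaf :
      ∀ v ∈ ({v | IsKFork 2 G v} : Finset V) ∪ ({v | IsKFork 3 G v} : Finset V), deg G v ≠ 1 := by
    simp only [mem_union, mem_filter, mem_univ, true_and]
    rintro v (h | h) <;> rw [h.1] <;> decide
  have hforks : #{v | IsKFork 2 G v} + 2 * #{v | IsKFork 3 G v} ≤ 4 :=
    card_add_two_mul_card_le_card (α := ℤˣ × ℤˣ) (S := claimedQuadrants G Γ)
      (disjoint_filter.mpr fun v _ h₂ h₃ => by have := h₂.1; have := h₃.1; omega)
      (fun v hv w hw => disjoint_claimedQuadrants hc (hnonleaf v hv) (hnonleaf w hw))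
      (fun v hv => one_le_card_claimedQuadrants_of_isKFork_two hc htree.connected
        (mem_filter.mp hv).2)
      (fun v hv => two_le_card_claimedQuadrants_of_isKFork_three hc htree.connected
        (mem_filter.mp hv).2)
  rw [hcard, hcard]
  omega

/-- Let `T` be a tree with maximum degree at most 4 and no vertex of degree 2
that admits a convex rectilinear planar drawing. Then exactly one of the
following holds: (i) `T` has no 3-fork and at most four 2-forks; (ii) `T` has
exactly two 3-forks and no 2-fork; (iii) `T` has exactly one 3-fork and at most
two 2-forks. Equivalently, the number of 2-forks plus twice the number of
3-forks is at most four. -/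
theorem stmt5 {V : Type*} [Fintype V] (G : SimpleGraph V)
    (htree : G.IsTree) (hdeg : ∀ v, deg G v ≤ 4) (hno2 : ∀ v, deg G v ≠ 2)
    (hdraw : HasConvexDrawing G) :
    (({v | IsKFork 3 G v}.ncard = 0 ∧ {v | IsKFork 2 G v}.ncard ≤ 4) ∨
     ({v | IsKFork 3 G v}.ncard = 2 ∧ {v | IsKFork 2 G v}.ncard = 0) ∨
     ({v | IsKFork 3 G v}.ncard = 1 ∧ {v | IsKFork 2 G v}.ncard ≤ 2)) ∧
    {v | IsKFork 2 G v}.ncard + 2 * {v | IsKFork 3 G v}.ncard ≤ 4 :=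
  stmt5_general G htree hdraw
end TurnRegular
end

section
/- Every tree with at least three vertices, maximum degree at most 4, and no vertex of degree 2 contains a 2-fork or a 3-fork, i.e., a vertex of degree 3 adjacent to at least two leaves or a vertex of degree 4 adjacent to at least three leaves. -/
open SimpleGraph

namespace TurnRegular

/-!
Root the tree at any vertex `r` and pick a non-leaf vertex `v` as far from `r` as possible.
A neighbour `u` of `v` closer to `r` lies on the path from `r` to `v`, so it is the vertex
preceding `v` there; every other neighbour is farther from `r`, hence a leaf. Since `v` has
degree 3 or 4, it is a 2-fork or a 3-fork. A non-leaf vertex exists because the degrees of a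
tree on `n ≥ 3` vertices sum to `2 (n - 1) > n`.
-/

section Trees

variable {V : Type*} {G : SimpleGraph V}

lemma deg_eq_degree [Fintype V] [DecidableRel G.Adj] (v : V) : deg G v = G.degree v := by
  rw [deg, degree, neighborFinset_def, Set.ncard_eq_toFinset_card']

lemma one_le_deg_of_adj [Finite V] {u v : V} (h : G.Adj v u) : 1 ≤ deg G u :=
  (Set.ncard_pos (Set.toFinite _)).2 ⟨v, h.symm⟩

lemma exists_two_le_deg_of_isTree [Finite V] (hG : G.IsTree) (hcard : 3 ≤ Nat.card V) :
    ∃ v, 2 ≤ deg G v := by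
  classical
  cases nonempty_fintype V
  by_contra! hleaf
  have hsum : ∑ w, G.degree w ≤ Fintype.card V :=
    calc ∑ w, G.degree w ≤ ∑ _w : V, 1 :=
          Finset.sum_le_sum fun w _ => by have := hleaf w; rw [deg_eq_degree] at this; omega
      _ = Fintype.card V := by simp
  have := G.sum_degrees_eq_twice_card_edges
  have := hG.card_edgeFinset
  rw [Nat.card_eq_fintype_card] at hcard
  omega

lemma _root_.SimpleGraph.IsTree.eq_penultimate_of_dist_lt (hG : G.IsTree) {r v u : V}
    {q : G.Walk r v} (hq : q.IsPath) (hadj : G.Adj v u) (hlt : G.dist r u < G.dist r v) :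
    u = q.penultimate := by
  classical
  obtain ⟨p, hp, hplen⟩ := (hG.connected r u).exists_path_of_dist
  have hv : v ∉ p.support := fun hv => by
    have := G.dist_le (p.takeUntil v hv)
    have := p.length_takeUntil_le_length hv
    omega
  exact hG.isAcyclic.eq_penultimate_of_adj_end hq hadj
    (hG.isAcyclic.mem_support_of_ne_mem_support_of_adj_of_isPath hq hp hadj hv)

lemma exists_nonleaf_subsingleton_nonleaf_adj [Finite V] (hG : G.IsTree)
    (hex : ∃ w, 2 ≤ deg G w) :
    ∃ v, 2 ≤ deg G v ∧ {u | G.Adj v u ∧ 2 ≤ deg G u}.Subsingleton := by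
  obtain ⟨r⟩ := hG.connected.nonempty
  obtain ⟨v, hv, hmax⟩ := Set.Finite.exists_maximalFor (fun w => G.dist r w)
    {w | 2 ≤ deg G w} (Set.toFinite _) hex
  obtain ⟨q, hq, -⟩ := (hG.connected r v).exists_path_of_dist
  have hclose : ∀ u ∈ {u | G.Adj v u ∧ 2 ≤ deg G u}, u = q.penultimate := by
    rintro u ⟨hadj, hu⟩
    refine hG.eq_penultimate_of_dist_lt hq hadj
      (lt_of_le_of_ne ?_ (hG.dist_ne_of_adj r hadj).symm)
    by_contra! hfar
    exact hfar.not_ge (hmax hu hfar.le)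
  exact ⟨v, hv, fun a ha b hb => (hclose a ha).trans (hclose b hb).symm⟩

lemma deg_le_ncard_leaf_adj_add_one [Finite V] {v : V}
    (h : {u | G.Adj v u ∧ 2 ≤ deg G u}.Subsingleton) :
    deg G v ≤ {u | G.Adj v u ∧ deg G u = 1}.ncard + 1 := by
  have hsplit : G.neighborSet v ⊆
      {u | G.Adj v u ∧ deg G u = 1} ∪ {u | G.Adj v u ∧ 2 ≤ deg G u} := fun u hadj => by
    have := one_le_deg_of_adj (G := G) hadj
    by_cases hu : deg G u = 1
    · exact Or.inl ⟨hadj, hu⟩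
    · exact Or.inr ⟨hadj, by omega⟩
  calc deg G v ≤ ({u | G.Adj v u ∧ deg G u = 1} ∪ {u | G.Adj v u ∧ 2 ≤ deg G u}).ncard :=
        Set.ncard_le_ncard hsplit (Set.toFinite _)
    _ ≤ _ := (Set.ncard_union_le _ _).trans
        (by gcongr; exact Set.ncard_le_one_iff_subsingleton.mpr h)

end Trees

/-- Every tree with at least three vertices, maximum degree at most 4, and no
vertex of degree 2 contains a 2-fork or a 3-fork, i.e., a vertex of degree 3
adjacent to at least two leaves or a vertex of degree 4 adjacent to at least
three leaves. -/
theorem stmt8 {V : Type*} [Fintype V] (G : SimpleGraph V)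
    (htree : G.IsTree) (hcard : 3 ≤ Nat.card V)
    (hdeg : ∀ v, deg G v ≤ 4) (hno2 : ∀ v, deg G v ≠ 2) :
    ∃ v, IsKFork 2 G v ∨ IsKFork 3 G v := by
  obtain ⟨v, hv, hnonleaf⟩ := exists_nonleaf_subsingleton_nonleaf_adj htree
    (exists_two_le_deg_of_isTree htree hcard)
  have hleaves := deg_le_ncard_leaf_adj_add_one hnonleaf
  have := hdeg v
  have := hno2 v
  refine ⟨v, ?_⟩
  obtain h3 | h4 : deg G v = 3 ∨ deg G v = 4 := by omega
  · exact Or.inl ⟨h3, by omega⟩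
  · exact Or.inr ⟨h4, by omega⟩

end TurnRegular
end
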